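/- Let ‖·‖ be a norm on c₀₀ satisfying equation (2.2). Let n ∈ ℕ and let (x_i)_{i=1}^n be a block basis of (e_i) such that each x_i is an ℓ₁^{k_i}-average with constant 2, and set k₀ = min{k_i : 1 ≤ i ≤ n}. If ℓ ∈ ℕ satisfies (f(ℓ) − 1)/ℓ > 12n·k₀^{−1/2}, then for all scalars (a_i)_{i=1}^n ⊆ [−1,1] with ‖∑_{i=1}^n a_i x_i‖ = 1 one has ‖∑_{i=1}^n a_i x_i‖_ℓ < ‖∑_{i=1}^n a_i x_i‖. -/

import Mathlib

open Finset

/-- `c₀₀`: finitely supported functions `ℕ → ℝ`. -/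
abbrev C00 := ℕ →₀ ℝ

/-- `f(t) = log₂(1+t)`. -/
noncomputable def f (t : ℝ) : ℝ := Real.logb 2 (1 + t)

/-- `E < F` for finite sets: every element of `E` is less than every element of `F`. -/
def FinsetLT (E F : Finset ℕ) : Prop := ∀ i ∈ E, ∀ j ∈ F, i < j

/-- `Ex`: coordinatewise product of `x` with the indicator of `E`. -/
noncomputable def restr (E : Finset ℕ) (x : C00) : C00 := x.filter (· ∈ E)

/-- `N` is a norm on `c₀₀`. -/
def IsNorm (N : C00 → ℝ) : Prop :=
  (∀ x y, N (x + y) ≤ N x + N y) ∧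
  (∀ (c : ℝ) (x), N (c • x) = |c| * N x) ∧
  (∀ x, x ≠ 0 → 0 < N x)

/-- the sup norm `‖x‖_∞`. -/
noncomputable def supNorm (x : C00) : ℝ := ⨆ i, |x i|

/-- `((m_i, E_i))_{i=1}^ℓ` is admissible: `2 ≤ m₁ < ⋯ < m_ℓ`, `E₁ < ⋯ < E_ℓ`,
and `f(m_{i+1}) > ∑_{j=1}^i |E_j|`. -/
def Admissible (ℓ : ℕ) (m : Fin ℓ → ℕ) (E : Fin ℓ → Finset ℕ) : Prop :=
  (∀ i, 2 ≤ m i) ∧ StrictMono m ∧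
  (∀ i j : Fin ℓ, i < j → FinsetLT (E i) (E j)) ∧
  ∀ i j : Fin ℓ, (i : ℕ) + 1 = (j : ℕ) →
    (∑ t ∈ Finset.Iic i, ((E t).card : ℝ)) < f (m j)

/-- `|||x|||_m = sup{(1/m) ∑_{i=1}^m ‖F_i x‖ : F₁ < ⋯ < F_m}`. -/
noncomputable def tnorm (N : C00 → ℝ) (m : ℕ) (x : C00) : ℝ :=
  sSup {r | ∃ F : Fin m → Finset ℕ,
    (∀ i j : Fin m, i < j → FinsetLT (F i) (F j)) ∧
    r = (1 / (m : ℝ)) * ∑ i, N (restr (F i) x)}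

/-- `‖x‖_ℓ = sup{(1/f(ℓ)) ∑_{i=1}^ℓ |||E_i x|||_{m_i} : ((m_i,E_i))_{i=1}^ℓ admissible}`. -/
noncomputable def normL (N : C00 → ℝ) (ℓ : ℕ) (x : C00) : ℝ :=
  sSup {r | ∃ (m : Fin ℓ → ℕ) (E : Fin ℓ → Finset ℕ), Admissible ℓ m E ∧
    r = (1 / f ℓ) * ∑ i, tnorm N (m i) (restr (E i) x)}

/-- `‖x‖_{(ℓ,m₀)}`: as `‖x‖_ℓ` but restricted to admissible families with `m₁ ≥ m₀`. -/
noncomputable def normLM (N : C00 → ℝ) (ℓ m₀ : ℕ) (x : C00) : ℝ :=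
  sSup {r | ∃ (m : Fin ℓ → ℕ) (E : Fin ℓ → Finset ℕ), Admissible ℓ m E ∧
    (∀ i, m₀ ≤ m i) ∧
    r = (1 / f ℓ) * ∑ i, tnorm N (m i) (restr (E i) x)}

/-- Equation (2.2):
`‖x‖ = max{‖x‖_∞, sup{(1/f(ℓ)) ∑ |||E_i x|||_{m_i} : ℓ ∈ ℕ, ((m_i,E_i)) admissible}}`. -/
def Eq22 (N : C00 → ℝ) : Prop :=
  ∀ x, N x = max (supNorm x)
    (sSup {r | ∃ (ℓ : ℕ) (m : Fin ℓ → ℕ) (E : Fin ℓ → Finset ℕ), Admissible ℓ m E ∧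
      r = (1 / f ℓ) * ∑ i, tnorm N (m i) (restr (E i) x)})

/-- A finite block basis: nonzero vectors with successive supports. -/
def BlockSeqFin {n : ℕ} (y : Fin n → C00) : Prop :=
  (∀ i, y i ≠ 0) ∧ ∀ i j : Fin n, i < j → FinsetLT (y i).support (y j).support

/-- An infinite block basis of `(e_i)`: nonzero vectors with successive supports. -/
def BlockSeqInf (y : ℕ → C00) : Prop :=
  (∀ i, y i ≠ 0) ∧ ∀ i, FinsetLT (y i).support (y (i + 1)).support

/-- `(z_k)_{k=1}^n` is a (finite) block basis of `(y_i)`. -/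
def FiniteBlockOf {n : ℕ} (z : Fin n → C00) (y : ℕ → C00) : Prop :=
  ∃ (B : Fin n → Finset ℕ) (c : ℕ → ℝ),
    (∀ k k' : Fin n, k < k' → FinsetLT (B k) (B k')) ∧
    (∀ k, z k = ∑ i ∈ B k, c i • y i) ∧ ∀ k, z k ≠ 0

/-- `x` is an `ℓ_p^k`-average with constant `C`. -/
def IsLpAverage (N : C00 → ℝ) (p : ℝ) (k : ℕ) (C : ℝ) (x : C00) : Prop :=
  ∃ y : Fin k → C00, BlockSeqFin y ∧ (∀ i, N (y i) = 1) ∧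
    (∀ a : Fin k → ℝ,
      C⁻¹ * (∑ i, |a i| ^ p) ^ (1 / p) ≤ N (∑ i, a i • y i) ∧
      N (∑ i, a i • y i) ≤ C * (∑ i, |a i| ^ p) ^ (1 / p)) ∧
    x = ((k : ℝ) ^ (-(1 / p))) • ∑ i, y i

/-- `C_p = 4(1 - 2^{-1/p})⁻¹`. -/
noncomputable def Cp (p : ℝ) : ℝ := 4 * (1 - (2 : ℝ) ^ (-(1 / p)))⁻¹

/-!
Write `y = ∑ aᵢ xᵢ`, fix an admissible family `((mᵢ, Eᵢ))_{i ≤ ℓ}` and put `σ = √k₀`. Each term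
`|||Eᵢ y|||_{mᵢ}` is bounded in three ways: by `‖y‖ = 1`; by `n/mᵢ + n/k₀`, because `m` successive
sets meet the `k_p` normalized blocks of the `ℓ₁`-average `x_p` in at most `m + k_p` (set, block)
pairs; and by `|Eᵢ| n/k₀`, because every coordinate of `y` is at most `n/k₀` in modulus and (2.2)
dominates `‖·‖` by the `ℓ₁`-norm. The terms with `mᵢ > σ` are then at most `2n/σ` each. Among the
terms with `mᵢ ≤ σ` the last one is at most `1`, and the earlier ones are at most `n/σ` together,
since admissibility gives their sets fewer than `f(m_last) ≤ m_last ≤ σ` points in all. Hence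
`‖y‖_ℓ ≤ (1 + 3nℓ/σ)/f(ℓ) < 1`.
-/

def IsSuccessive {ι : Type*} [LT ι] (F : ι → Finset ℕ) : Prop :=
  ∀ i j, i < j → FinsetLT (F i) (F j)

lemma IsSuccessive.inter {ι : Type*} [LT ι] {F : ι → Finset ℕ} (hF : IsSuccessive F)
    (E : Finset ℕ) : IsSuccessive fun i => F i ∩ E :=
  fun i j hij s hs t ht => hF i j hij s (mem_inter.1 hs).1 t (mem_inter.1 ht).1

lemma IsSuccessive.card_filter_mem_le_one {ι : Type*} [Fintype ι] [LinearOrder ι]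
    {F : ι → Finset ℕ} (hF : IsSuccessive F) (s : ℕ) : #{i | s ∈ F i} ≤ 1 := by
  refine card_le_one.2 fun i hi j hj => ?_
  simp only [mem_filter, mem_univ, true_and] at hi hj
  rcases lt_trichotomy i j with h | h | h
  · exact absurd (hF i j h s hi s hj) (lt_irrefl s)
  · exact h
  · exact absurd (hF j i h s hj s hi) (lt_irrefl s)

lemma sum_le_of_le_ite_of_card_le_one {ι : Type*} [Fintype ι] {P : ι → Prop} [DecidablePred P]
    (hP : #{i | P i} ≤ 1) {g : ι → ℝ} {c : ℝ} (hc : 0 ≤ c)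
    (hg : ∀ i, g i ≤ if P i then c else 0) : ∑ i, g i ≤ c :=
  calc ∑ i, g i ≤ ∑ i, if P i then c else 0 := sum_le_sum fun i _ => hg i
    _ = #{i | P i} * c := by rw [sum_ite, sum_const_zero, add_zero, sum_const, nsmul_eq_mul]
    _ ≤ 1 * c := by gcongr; exact_mod_cast hP
    _ = c := one_mul c

lemma le_of_not_disjoint_of_lt {m k : ℕ} {G : Fin m → Finset ℕ} {D : Fin k → Finset ℕ}
    (hG : IsSuccessive G) (hD : IsSuccessive D) {i j : Fin m} {t u : Fin k}
    (hit : ¬ Disjoint (G i) (D t)) (hju : ¬ Disjoint (G j) (D u)) (hij : i < j) : t ≤ u := by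
  obtain ⟨s, hsG, hsD⟩ := not_disjoint_iff.1 hit
  obtain ⟨s', hsG', hsD'⟩ := not_disjoint_iff.1 hju
  by_contra! hut
  exact lt_asymm (hG i j hij s hsG s' hsG') (hD u t hut s' hsD' s hsD)

/-- Along a staircase `i + t` is injective, so it has at most `m + k` steps. -/
lemma card_not_disjoint_le {m k : ℕ} {G : Fin m → Finset ℕ} {D : Fin k → Finset ℕ}
    (hG : IsSuccessive G) (hD : IsSuccessive D) :
    #{p : Fin m × Fin k | ¬ Disjoint (G p.1) (D p.2)} ≤ m + k := by
  set S : Finset (Fin m × Fin k) := {p | ¬ Disjoint (G p.1) (D p.2)}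
  have hmaps : Set.MapsTo (fun p : Fin m × Fin k => (p.1 : ℕ) + p.2) S (range (m + k)) :=
    fun p _ => mem_range.2 (by dsimp only; omega)
  have hinj : Set.InjOn (fun p : Fin m × Fin k => (p.1 : ℕ) + p.2) S := by
    rintro ⟨i, t⟩ hp ⟨j, u⟩ hq (hsum : (i : ℕ) + t = j + u)
    simp only [S, coe_filter, mem_univ, true_and, Set.mem_ofPred_eq] at hp hq
    rcases lt_trichotomy i j with h | rfl | h
    · have : (t : ℕ) ≤ u := le_of_not_disjoint_of_lt hG hD hp hq h
      have : (i : ℕ) < j := h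
      omega
    · simp only [Prod.mk.injEq, true_and]
      exact Fin.ext (by omega)
    · have : (u : ℕ) ≤ t := le_of_not_disjoint_of_lt hG hD hq hp h
      have : (j : ℕ) < i := h
      omega
  simpa using card_le_card_of_injOn _ hmaps hinj

lemma restr_apply (E : Finset ℕ) (x : C00) (s : ℕ) :
    restr E x s = if s ∈ E then x s else 0 :=
  Finsupp.filter_apply _ _ _

lemma abs_restr_apply_le (E : Finset ℕ) (x : C00) (s : ℕ) : |restr E x s| ≤ |x s| := by
  rw [restr_apply]
  split_ifs <;> simp

lemma restr_sum {ι : Type*} (E : Finset ℕ) (t : Finset ι) (g : ι → C00) :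
    restr E (∑ i ∈ t, g i) = ∑ i ∈ t, restr E (g i) :=
  Finsupp.filter_sum _ _

lemma restr_smul (E : Finset ℕ) (c : ℝ) (x : C00) : restr E (c • x) = c • restr E x :=
  Finsupp.filter_smul

lemma restr_restr (E F : Finset ℕ) (x : C00) : restr E (restr F x) = restr (E ∩ F) x := by
  ext s
  simp only [restr_apply, mem_inter]
  split_ifs <;> tauto

lemma restr_eq_zero_of_disjoint {E : Finset ℕ} {x : C00} (h : Disjoint E x.support) :
    restr E x = 0 :=
  (Finsupp.filter_eq_zero_iff _ _).2 fun _ hs =>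
    Finsupp.notMem_support_iff.1 (disjoint_left.1 h hs)

lemma restr_single (E : Finset ℕ) (s : ℕ) (c : ℝ) :
    restr E (Finsupp.single s c) = if s ∈ E then Finsupp.single s c else 0 := by
  split_ifs with h
  · exact Finsupp.filter_single_of_pos _ h
  · exact Finsupp.filter_single_of_neg _ h

namespace IsNorm

variable {N : C00 → ℝ}

lemma map_zero (hN : IsNorm N) : N 0 = 0 := by
  simpa using hN.2.1 0 0

lemma nonneg (hN : IsNorm N) (x : C00) : 0 ≤ N x := by
  rcases eq_or_ne x 0 with rfl | h
  · exact hN.map_zero.ge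
  · exact (hN.2.2 x h).le

lemma sum_le (hN : IsNorm N) {ι : Type*} (t : Finset ι) (g : ι → C00) :
    N (∑ i ∈ t, g i) ≤ ∑ i ∈ t, N (g i) :=
  le_sum_of_subadditive N hN.map_zero.le hN.1 t g

lemma smul_le (hN : IsNorm N) {c : ℝ} (hc : |c| ≤ 1) (x : C00) : N (c • x) ≤ N x := by
  rw [hN.2.1]
  exact mul_le_of_le_one_left (hN.nonneg x) hc

end IsNorm

noncomputable def l1Norm (x : C00) : ℝ := x.sum fun _ c => |c|

lemma l1Norm_nonneg (x : C00) : 0 ≤ l1Norm x :=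
  sum_nonneg fun _ _ => abs_nonneg _

lemma l1Norm_restr (E : Finset ℕ) (x : C00) :
    l1Norm (restr E x) = ∑ s ∈ x.support, if s ∈ E then |x s| else 0 := by
  rw [l1Norm, Finsupp.sum, restr, Finsupp.support_filter, sum_filter]
  refine sum_congr rfl fun s _ => ?_
  split_ifs with h
  · rw [Finsupp.filter_apply_pos _ _ h]
  · rfl

lemma sum_l1Norm_restr_le {ι : Type*} [Fintype ι] [LinearOrder ι] {G : ι → Finset ℕ}
    (hG : IsSuccessive G) (x : C00) : ∑ j, l1Norm (restr (G j) x) ≤ l1Norm x := by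
  simp only [l1Norm_restr]
  rw [sum_comm]
  exact sum_le_sum fun s _ =>
    sum_le_of_le_ite_of_card_le_one (hG.card_filter_mem_le_one s) (abs_nonneg _) fun _ => le_rfl

lemma l1Norm_restr_le_card_mul {x : C00} {c : ℝ} (hc : ∀ s, |x s| ≤ c) (E : Finset ℕ) :
    l1Norm (restr E x) ≤ #E * c := by
  rw [l1Norm, Finsupp.sum]
  calc ∑ s ∈ (restr E x).support, |restr E x s|
      ≤ ∑ s ∈ (restr E x).support, c :=
        sum_le_sum fun s _ => (abs_restr_apply_le E x s).trans (hc s)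
    _ = #(restr E x).support * c := by rw [sum_const, nsmul_eq_mul]
    _ ≤ #E * c := by
      gcongr
      · exact (abs_nonneg _).trans (hc 0)
      · intro s hs
        simp only [restr, Finsupp.support_filter, mem_filter] at hs
        exact hs.2

lemma abs_apply_le_supNorm (x : C00) (s : ℕ) : |x s| ≤ supNorm x := by
  refine le_ciSup (f := fun s => |x s|) ?_ s
  rw [← Function.comp_def, Set.range_comp]
  exact (x.finite_range.image abs).bddAbove

lemma supNorm_restr_le (E : Finset ℕ) (x : C00) : supNorm (restr E x) ≤ supNorm x :=
  ciSup_le fun s => (abs_restr_apply_le E x s).trans (abs_apply_le_supNorm x s)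

lemma supNorm_single_one_le (s : ℕ) : supNorm (Finsupp.single s 1) ≤ 1 := by
  refine ciSup_le fun t => ?_
  rw [Finsupp.single_apply]
  split_ifs <;> norm_num

lemma one_le_f {t : ℝ} (ht : 1 ≤ t) : 1 ≤ f t := by
  rw [f, Real.le_logb_iff_rpow_le one_lt_two (by linarith), Real.rpow_one]
  linarith

lemma f_natCast_le (m : ℕ) : f m ≤ m := by
  rw [f, Real.logb_le_iff_le_rpow one_lt_two (by positivity), Real.rpow_natCast]
  have : 1 + m ≤ 2 ^ m := by have := @Nat.lt_two_pow_self m; omega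
  exact_mod_cast this

/-- Also true for `ℓ = 0`, where `f 0 = 0` and so `1 / f 0 = 0`. -/
lemma one_div_f_mul_le (ℓ : ℕ) {S : ℝ} (hS : 0 ≤ S) : 1 / f ℓ * S ≤ S := by
  rcases Nat.eq_zero_or_pos ℓ with rfl | hℓ
  · simp [f, hS]
  · have hf : 1 ≤ f ℓ := one_le_f (by exact_mod_cast hℓ)
    exact mul_le_of_le_one_left hS (div_le_one_of_le₀ hf (zero_le_one.trans hf))

section TripleNorm

variable {N : C00 → ℝ}

lemma tnorm_le_of_forall {m : ℕ} {x : C00} {B : ℝ} (hB : 0 ≤ B)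
    (h : ∀ F : Fin m → Finset ℕ, IsSuccessive F → 1 / (m : ℝ) * ∑ i, N (restr (F i) x) ≤ B) :
    tnorm N m x ≤ B :=
  Real.sSup_le (by rintro _ ⟨F, hF, rfl⟩; exact h F hF) hB

lemma tnorm_nonneg (hN : IsNorm N) (m : ℕ) (x : C00) : 0 ≤ tnorm N m x :=
  Real.sSup_nonneg <| by
    rintro _ ⟨F, -, rfl⟩
    exact mul_nonneg (by positivity) (sum_nonneg fun i _ => hN.nonneg _)

lemma tnorm_single_le (hN : IsNorm N) (m s : ℕ) (c : ℝ) :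
    tnorm N m (Finsupp.single s c) ≤ 1 / (m : ℝ) * N (Finsupp.single s c) := by
  refine tnorm_le_of_forall (mul_nonneg (by positivity) (hN.nonneg _)) fun F hF => ?_
  gcongr
  refine sum_le_of_le_ite_of_card_le_one (hF.card_filter_mem_le_one s) (hN.nonneg _) fun j => ?_
  rw [restr_single]
  split_ifs <;> simp [hN.map_zero]

lemma tnorm_restr_le_of_sum_le {m : ℕ} {y : C00} {B : ℝ} (hB : 0 ≤ B)
    (h : ∀ G : Fin m → Finset ℕ, IsSuccessive G → ∑ j, N (restr (G j) y) ≤ B)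
    (E : Finset ℕ) : tnorm N m (restr E y) ≤ B / m := by
  refine tnorm_le_of_forall (by positivity) fun F hF => ?_
  simp only [restr_restr, one_div_mul_eq_div]
  exact div_le_div_of_nonneg_right (h _ (hF.inter E)) (Nat.cast_nonneg m)

end TripleNorm

section Admissible

variable {ℓ : ℕ} {m : Fin ℓ → ℕ} {E : Fin ℓ → Finset ℕ}

lemma Admissible.isSuccessive (h : Admissible ℓ m E) : IsSuccessive E := h.2.2.1

lemma Admissible.inter (h : Admissible ℓ m E) (F : Finset ℕ) :
    Admissible ℓ m fun i => E i ∩ F :=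
  ⟨h.1, h.2.1, h.isSuccessive.inter F, fun i j hij =>
    (sum_le_sum fun _ _ => by exact_mod_cast card_le_card inter_subset_left).trans_lt
      (h.2.2.2 i j hij)⟩

end Admissible

namespace Eq22

variable {N : C00 → ℝ}

def admissibleSums (N : C00 → ℝ) (x : C00) : Set ℝ :=
  {r | ∃ (ℓ : ℕ) (m : Fin ℓ → ℕ) (E : Fin ℓ → Finset ℕ), Admissible ℓ m E ∧
    r = (1 / f ℓ) * ∑ i, tnorm N (m i) (restr (E i) x)}

lemma eq_max (hEq : Eq22 N) (x : C00) :
    N x = max (supNorm x) (sSup (admissibleSums N x)) :=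
  hEq x

lemma supNorm_le (hEq : Eq22 N) (x : C00) : supNorm x ≤ N x :=
  (le_max_left _ _).trans (hEq.eq_max x).ge

/-- Every admissible sum of `e_s` is at most `N e_s / 2`, as `m_i ≥ 2` and `s` lies in at most one
`E_i`; so (2.2) leaves only the sup-norm. -/
lemma norm_single_one_le (hN : IsNorm N) (hEq : Eq22 N) (s : ℕ) :
    N (Finsupp.single s 1) ≤ 1 := by
  set e : C00 := Finsupp.single s 1
  have htnorm : ∀ m, 2 ≤ m → ∀ E, tnorm N m (restr E e) ≤ if s ∈ E then N e / 2 else 0 := by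
    intro m hm E
    have hm' : 1 / (m : ℝ) ≤ 1 / 2 := one_div_le_one_div_of_le two_pos (by exact_mod_cast hm)
    rw [restr_single]
    split_ifs
    · calc tnorm N m e ≤ 1 / m * N e := tnorm_single_le hN m s 1
        _ ≤ 1 / 2 * N e := by gcongr; exact hN.nonneg e
        _ = N e / 2 := by ring
    · simpa [hN.map_zero] using tnorm_single_le hN m s 0
  have hsums : sSup (admissibleSums N e) ≤ N e / 2 := by
    refine Real.sSup_le ?_ (by linarith [hN.nonneg e])
    rintro _ ⟨ℓ, m, E, hadm, rfl⟩
    refine (one_div_f_mul_le ℓ (sum_nonneg fun i _ => tnorm_nonneg hN _ _)).trans ?_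
    exact sum_le_of_le_ite_of_card_le_one (hadm.isSuccessive.card_filter_mem_le_one s)
      (by linarith [hN.nonneg e]) fun i => htnorm (m i) (hadm.1 i) (E i)
  have : N e ≤ max 1 (N e / 2) :=
    (hEq.eq_max e).trans_le (max_le_max (supNorm_single_one_le s) hsums)
  rcases le_max_iff.1 this with h | h <;> linarith

lemma norm_le_l1Norm (hN : IsNorm N) (hEq : Eq22 N) (x : C00) : N x ≤ l1Norm x := by
  conv_lhs => rw [← Finsupp.sum_single x]
  refine (hN.sum_le _ _).trans (sum_le_sum fun s _ => ?_)
  rw [← Finsupp.smul_single_one, hN.2.1]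
  exact mul_le_of_le_one_right (abs_nonneg _) (hEq.norm_single_one_le hN s)

lemma tnorm_le_l1Norm (hN : IsNorm N) (hEq : Eq22 N) (m : ℕ) (x : C00) :
    tnorm N m x ≤ l1Norm x :=
  tnorm_le_of_forall (l1Norm_nonneg x) fun F hF =>
    calc 1 / (m : ℝ) * ∑ i, N (restr (F i) x)
        ≤ ∑ i, N (restr (F i) x) :=
          mul_le_of_le_one_left (sum_nonneg fun i _ => hN.nonneg _)
            (by simpa using Nat.cast_inv_le_one m)
      _ ≤ ∑ i, l1Norm (restr (F i) x) := sum_le_sum fun i _ => hEq.norm_le_l1Norm hN _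
      _ ≤ l1Norm x := sum_l1Norm_restr_le hF x

lemma bddAbove_admissibleSums (hN : IsNorm N) (hEq : Eq22 N) (x : C00) :
    BddAbove (admissibleSums N x) := by
  refine ⟨l1Norm x, ?_⟩
  rintro _ ⟨ℓ, m, E, hadm, rfl⟩
  calc 1 / f ℓ * ∑ i, tnorm N (m i) (restr (E i) x)
      ≤ ∑ i, tnorm N (m i) (restr (E i) x) :=
        one_div_f_mul_le ℓ (sum_nonneg fun i _ => tnorm_nonneg hN _ _)
    _ ≤ ∑ i, l1Norm (restr (E i) x) := sum_le_sum fun i _ => hEq.tnorm_le_l1Norm hN _ _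
    _ ≤ l1Norm x := sum_l1Norm_restr_le hadm.isSuccessive x

lemma norm_restr_le (hN : IsNorm N) (hEq : Eq22 N) (E : Finset ℕ) (x : C00) :
    N (restr E x) ≤ N x := by
  rw [hEq.eq_max (restr E x)]
  refine max_le ((supNorm_restr_le E x).trans (hEq.supNorm_le x)) (Real.sSup_le ?_ (hN.nonneg x))
  rintro _ ⟨ℓ, m, F, hadm, rfl⟩
  have hmem : 1 / f ℓ * ∑ i, tnorm N (m i) (restr (F i) (restr E x)) ∈ admissibleSums N x :=
    ⟨ℓ, m, fun i => F i ∩ E, hadm.inter E, by simp only [restr_restr]⟩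
  exact (le_csSup (hEq.bddAbove_admissibleSums hN x) hmem).trans
    ((le_max_right _ _).trans (hEq.eq_max x).ge)

lemma tnorm_restr_le (hN : IsNorm N) (hEq : Eq22 N) (m : ℕ) (E : Finset ℕ) (x : C00) :
    tnorm N m (restr E x) ≤ N x := by
  refine tnorm_le_of_forall (hN.nonneg x) fun F _ => ?_
  calc 1 / (m : ℝ) * ∑ i, N (restr (F i) (restr E x))
      ≤ 1 / (m : ℝ) * ∑ _i : Fin m, N x := by
        gcongr with i
        exact (hEq.norm_restr_le hN _ _).trans (hEq.norm_restr_le hN _ _)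
    _ ≤ N x := by
        rcases eq_or_ne m 0 with rfl | hm
        · simpa using hN.nonneg x
        · simp [hm]

end Eq22

section AdmissibleSum

variable {ℓ : ℕ} {m : Fin ℓ → ℕ} {E : Fin ℓ → Finset ℕ} {T : Fin ℓ → ℝ} {b σ : ℝ}

lemma Admissible.sum_card_lt (h : Admissible ℓ m E) (j : Fin ℓ) :
    ∑ t ∈ Iio j, (#(E t) : ℝ) < f (m j) := by
  rcases Nat.eq_zero_or_pos j with hj | hj
  · have : Iio j = ∅ := by ext t; simp [Fin.lt_def, hj]
    rw [this, sum_empty]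
    exact one_pos.trans_le (one_le_f (by exact_mod_cast one_le_two.trans (h.1 j)))
  · let i : Fin ℓ := ⟨j - 1, by omega⟩
    have : Iio j = Iic i := by
      ext t
      simp only [mem_Iio, mem_Iic, Fin.lt_def, Fin.le_def, i]
      omega
    rw [this]
    exact h.2.2.2 i j (by simp only [i]; omega)

lemma Admissible.sum_filter_le_le (hadm : Admissible ℓ m E) (hb : 0 ≤ b) (hσ : 0 < σ)
    (hT0 : ∀ i, 0 ≤ T i) (hT1 : ∀ i, T i ≤ 1) (hTcard : ∀ i, T i ≤ #(E i) * (b / σ ^ 2)) :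
    ∑ i with (m i : ℝ) ≤ σ, T i ≤ 1 + b / σ := by
  set S : Finset (Fin ℓ) := {i | (m i : ℝ) ≤ σ}
  rcases S.eq_empty_or_nonempty with hS | hS
  · rw [hS, sum_empty]
    positivity
  set i₀ := S.max' hS
  have hi₀S : i₀ ∈ S := S.max'_mem hS
  have hi₀ : (m i₀ : ℝ) ≤ σ := (mem_filter.1 hi₀S).2
  have hsub : S.erase i₀ ⊆ Iio i₀ := fun i hi =>
    mem_Iio.2 (lt_of_le_of_ne (S.le_max' i (mem_of_mem_erase hi)) (ne_of_mem_erase hi))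
  have hcard : ∑ i ∈ Iio i₀, (#(E i) : ℝ) ≤ σ :=
    ((hadm.sum_card_lt i₀).trans_le (f_natCast_le _)).le.trans hi₀
  calc ∑ i ∈ S, T i = T i₀ + ∑ i ∈ S.erase i₀, T i := (add_sum_erase S T hi₀S).symm
    _ ≤ 1 + ∑ i ∈ Iio i₀, #(E i) * (b / σ ^ 2) :=
        add_le_add (hT1 i₀) ((sum_le_sum_of_subset_of_nonneg hsub fun i _ _ => hT0 i).trans
          (sum_le_sum fun i _ => hTcard i))
    _ = 1 + (∑ i ∈ Iio i₀, (#(E i) : ℝ)) * (b / σ ^ 2) := by rw [sum_mul]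
    _ ≤ 1 + σ * (b / σ ^ 2) := by gcongr
    _ = 1 + b / σ := by field_simp

lemma sum_filter_lt_le (hb : 0 ≤ b) (hσ : 1 ≤ σ)
    (hTm : ∀ i, T i ≤ b / m i + b / σ ^ 2) :
    ∑ i with σ < m i, T i ≤ ℓ * (2 * (b / σ)) := by
  have hσ0 : 0 < σ := one_pos.trans_le hσ
  have hsq : b / σ ^ 2 ≤ b / σ := div_le_div_of_nonneg_left hb hσ0 (by nlinarith)
  calc ∑ i with σ < m i, T i ≤ ∑ i with σ < m i, 2 * (b / σ) :=
        sum_le_sum fun i hi => by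
          have hmi : σ < m i := (mem_filter.1 hi).2
          have : b / m i ≤ b / σ := div_le_div_of_nonneg_left hb hσ0 hmi.le
          linarith [hTm i]
    _ ≤ ∑ _i, 2 * (b / σ) :=
        sum_le_sum_of_subset_of_nonneg (filter_subset _ _) fun _ _ _ => by positivity
    _ = ℓ * (2 * (b / σ)) := by rw [sum_const, card_univ, Fintype.card_fin, nsmul_eq_mul]

lemma Admissible.sum_le (hadm : Admissible ℓ m E) (hb : 0 ≤ b) (hσ : 1 ≤ σ)
    (hT0 : ∀ i, 0 ≤ T i) (hT1 : ∀ i, T i ≤ 1) (hTm : ∀ i, T i ≤ b / m i + b / σ ^ 2)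
    (hTcard : ∀ i, T i ≤ #(E i) * (b / σ ^ 2)) :
    ∑ i, T i ≤ 1 + (2 * ℓ + 1) * (b / σ) := by
  rw [← sum_filter_add_sum_filter_not univ fun i => (m i : ℝ) ≤ σ]
  simp only [not_le]
  linarith [hadm.sum_filter_le_le hb (one_pos.trans_le hσ) hT0 hT1 hTcard,
    sum_filter_lt_le hb hσ hTm]

end AdmissibleSum

section Averages

variable {N : C00 → ℝ} {k : ℕ} {C : ℝ} {x : C00}

lemma IsLpAverage.exists_eq_inv_smul_sum (h : IsLpAverage N 1 k C x) :
    ∃ z : Fin k → C00, IsSuccessive (fun t => (z t).support) ∧ (∀ t, N (z t) = 1) ∧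
      x = (k : ℝ)⁻¹ • ∑ t, z t := by
  obtain ⟨z, hz, hz1, -, rfl⟩ := h
  exact ⟨z, hz.2, hz1, by norm_num [Real.rpow_neg_one]⟩

lemma IsLpAverage.pos (h : IsLpAverage N 1 k C x) (hx : x ≠ 0) : 0 < k := by
  obtain ⟨z, -, -, rfl⟩ := h.exists_eq_inv_smul_sum
  refine Nat.pos_of_ne_zero fun hk => hx ?_
  subst hk
  simp

lemma IsLpAverage.abs_apply_le (hEq : Eq22 N) (h : IsLpAverage N 1 k C x) (s : ℕ) :
    |x s| ≤ (k : ℝ)⁻¹ := by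
  obtain ⟨z, hz, hz1, rfl⟩ := h.exists_eq_inv_smul_sum
  have hsum : ∑ t, |z t s| ≤ 1 :=
    sum_le_of_le_ite_of_card_le_one (hz.card_filter_mem_le_one s) zero_le_one fun t => by
      split_ifs with hs
      · exact (abs_apply_le_supNorm _ s).trans ((hEq.supNorm_le _).trans_eq (hz1 t))
      · rw [Finsupp.notMem_support_iff.1 hs, abs_zero]
  rw [Finsupp.smul_apply, Finsupp.finsetSum_apply, smul_eq_mul, abs_mul, abs_inv, Nat.abs_cast]
  exact mul_le_of_le_one_right (by positivity) ((abs_sum_le_sum_abs _ _).trans hsum)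

lemma IsLpAverage.sum_norm_restr_le (hN : IsNorm N) (hEq : Eq22 N) (h : IsLpAverage N 1 k C x)
    {m : ℕ} {G : Fin m → Finset ℕ} (hG : IsSuccessive G) :
    ∑ j, N (restr (G j) x) ≤ (k : ℝ)⁻¹ * (m + k) := by
  obtain ⟨z, hz, hz1, rfl⟩ := h.exists_eq_inv_smul_sum
  have hblock : ∀ j t,
      N (restr (G j) (z t)) ≤ if ¬ Disjoint (G j) (z t).support then 1 else 0 := by
    intro j t
    by_cases hjt : Disjoint (G j) (z t).support
    · rw [if_neg (not_not.2 hjt), restr_eq_zero_of_disjoint hjt, hN.map_zero]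
    · rw [if_pos hjt]
      exact (hEq.norm_restr_le hN _ _).trans_eq (hz1 t)
  calc ∑ j, N (restr (G j) ((k : ℝ)⁻¹ • ∑ t, z t))
      = (k : ℝ)⁻¹ * ∑ j, N (∑ t, restr (G j) (z t)) := by
        simp only [restr_smul, restr_sum, hN.2.1, abs_inv, Nat.abs_cast, mul_sum]
    _ ≤ (k : ℝ)⁻¹ * ∑ j, ∑ t, (if ¬ Disjoint (G j) (z t).support then 1 else 0 : ℝ) := by
        gcongr with j
        exact (hN.sum_le _ _).trans (sum_le_sum fun t _ => hblock j t)
    _ = (k : ℝ)⁻¹ * #{p : Fin m × Fin k | ¬ Disjoint (G p.1) (z p.2).support} := by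
        rw [← sum_boole, ← univ_product_univ, sum_product]
    _ ≤ (k : ℝ)⁻¹ * (m + k) := by
        gcongr
        exact_mod_cast card_not_disjoint_le hG hz

end Averages

section Combination

variable {N : C00 → ℝ} {n : ℕ} {x : Fin n → C00} {k : Fin n → ℕ} {C : ℝ} {k0 : ℕ}
  {a : Fin n → ℝ}

lemma abs_sum_smul_apply_le (hEq : Eq22 N) (havg : ∀ p, IsLpAverage N 1 (k p) C (x p))
    (hk : ∀ p, k0 ≤ k p) (hk0 : 0 < k0) (ha : ∀ p, |a p| ≤ 1) (s : ℕ) :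
    |(∑ p, a p • x p) s| ≤ n / k0 := by
  have hk0' : (0 : ℝ) < k0 := by exact_mod_cast hk0
  rw [Finsupp.finsetSum_apply]
  calc |∑ p, (a p • x p) s| ≤ ∑ p, |(a p • x p) s| := abs_sum_le_sum_abs _ _
    _ ≤ ∑ _p : Fin n, (k0 : ℝ)⁻¹ := sum_le_sum fun p _ => by
        rw [Finsupp.smul_apply, smul_eq_mul, abs_mul]
        calc |a p| * |x p s| ≤ 1 * (k p : ℝ)⁻¹ :=
              mul_le_mul (ha p) ((havg p).abs_apply_le hEq s) (abs_nonneg _) zero_le_one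
          _ ≤ (k0 : ℝ)⁻¹ := by rw [one_mul]; exact inv_anti₀ hk0' (by exact_mod_cast hk p)
    _ = n / k0 := by simp [div_eq_mul_inv]

lemma sum_norm_restr_sum_smul_le (hN : IsNorm N) (hEq : Eq22 N)
    (havg : ∀ p, IsLpAverage N 1 (k p) C (x p)) (hk : ∀ p, k0 ≤ k p) (hk0 : 0 < k0)
    (ha : ∀ p, |a p| ≤ 1) {m : ℕ} {G : Fin m → Finset ℕ} (hG : IsSuccessive G) :
    ∑ j, N (restr (G j) (∑ p, a p • x p)) ≤ n * (1 + m / k0) := by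
  have hk0' : (0 : ℝ) < k0 := by exact_mod_cast hk0
  calc ∑ j, N (restr (G j) (∑ p, a p • x p)) ≤ ∑ j, ∑ p, N (restr (G j) (x p)) := by
        gcongr with j
        rw [restr_sum]
        refine (hN.sum_le _ _).trans (sum_le_sum fun p _ => ?_)
        rw [restr_smul]
        exact hN.smul_le (ha p) _
    _ = ∑ p, ∑ j, N (restr (G j) (x p)) := sum_comm
    _ ≤ ∑ _p : Fin n, (1 + m / k0 : ℝ) := by
        gcongr with p
        have hkp : (0 : ℝ) < k p := hk0'.trans_le (by exact_mod_cast hk p)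
        calc ∑ j, N (restr (G j) (x p)) ≤ (k p : ℝ)⁻¹ * (m + k p) :=
              (havg p).sum_norm_restr_le hN hEq hG
          _ = 1 + m / k p := by field_simp; ring
          _ ≤ 1 + m / k0 := by gcongr; exact_mod_cast hk p
    _ = n * (1 + m / k0) := by rw [sum_const, card_univ, Fintype.card_fin, nsmul_eq_mul]

lemma tnorm_restr_sum_smul_le (hN : IsNorm N) (hEq : Eq22 N)
    (havg : ∀ p, IsLpAverage N 1 (k p) C (x p)) (hk : ∀ p, k0 ≤ k p) (hk0 : 0 < k0)
    (ha : ∀ p, |a p| ≤ 1) {m : ℕ} (hm : m ≠ 0) (E : Finset ℕ) :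
    tnorm N m (restr E (∑ p, a p • x p)) ≤ n / m + n / k0 := by
  calc tnorm N m (restr E (∑ p, a p • x p)) ≤ n * (1 + m / k0) / m :=
        tnorm_restr_le_of_sum_le (by positivity)
          (fun _ hG => sum_norm_restr_sum_smul_le hN hEq havg hk hk0 ha hG) E
    _ = n / m + n / k0 := by field_simp

lemma normL_sum_smul_le (hN : IsNorm N) (hEq : Eq22 N)
    (havg : ∀ p, IsLpAverage N 1 (k p) C (x p)) (hk : ∀ p, k0 ≤ k p) (hk0 : 0 < k0)
    (ha : ∀ p, |a p| ≤ 1) (hy : N (∑ p, a p • x p) ≤ 1) {ℓ : ℕ} (hℓ : 0 < ℓ) :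
    normL N ℓ (∑ p, a p • x p) ≤ (1 + (2 * ℓ + 1) * (n / √k0)) / f ℓ := by
  have hσ : 1 ≤ √(k0 : ℝ) := Real.one_le_sqrt.2 (by exact_mod_cast hk0)
  have hσsq : √(k0 : ℝ) ^ 2 = k0 := Real.sq_sqrt (Nat.cast_nonneg _)
  have hf : 0 < f ℓ := one_pos.trans_le (one_le_f (by exact_mod_cast hℓ))
  refine Real.sSup_le ?_ (by positivity)
  rintro _ ⟨m, E, hadm, rfl⟩
  rw [one_div_mul_eq_div]
  refine div_le_div_of_nonneg_right (hadm.sum_le n.cast_nonneg hσ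
    (fun i => tnorm_nonneg hN _ _) (fun i => ?_) (fun i => ?_) (fun i => ?_)) hf.le
  · exact (hEq.tnorm_restr_le hN _ _ _).trans hy
  · rw [hσsq]
    exact tnorm_restr_sum_smul_le hN hEq havg hk hk0 ha (by linarith [hadm.1 i]) _
  · rw [hσsq]
    exact (hEq.tnorm_le_l1Norm hN _ _).trans
      (l1Norm_restr_le_card_mul (abs_sum_smul_apply_le hEq havg hk hk0 ha) _)

end Combination

/-- Remark 2.6. -/
theorem statement10 (N : C00 → ℝ) (hN : IsNorm N) (hEq : Eq22 N)
    (n : ℕ) (x : Fin n → C00) (hx : BlockSeqFin x)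
    (k : Fin n → ℕ) (havg : ∀ i, IsLpAverage N 1 (k i) 2 (x i))
    (k0 : ℕ) (hk0 : IsLeast (Set.range k) k0)
    (ℓ : ℕ) (hℓ : (f ℓ - 1) / (ℓ : ℝ) > 12 * n * (k0 : ℝ) ^ (-(1 / 2) : ℝ))
    (a : Fin n → ℝ) (ha : ∀ i, |a i| ≤ 1)
    (hone : N (∑ i, a i • x i) = 1) :
    normL N ℓ (∑ i, a i • x i) < N (∑ i, a i • x i) := by
  obtain ⟨p₀, hp₀⟩ := hk0.1
  have hk : ∀ p, k0 ≤ k p := fun p => hk0.2 ⟨p, rfl⟩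
  have hk0pos : 0 < k0 := hp₀ ▸ (havg p₀).pos (hx.1 p₀)
  rw [Real.rpow_neg (Nat.cast_nonneg _), ← Real.sqrt_eq_rpow] at hℓ
  have hℓpos : 0 < ℓ := Nat.pos_of_ne_zero fun h => by
    rw [h, Nat.cast_zero, div_zero] at hℓ
    exact hℓ.not_ge (by positivity)
  have hf : 1 ≤ f ℓ := one_le_f (by exact_mod_cast hℓpos)
  have hgap : 12 * n * (√k0)⁻¹ * ℓ < f ℓ - 1 := (lt_div_iff₀ (by positivity)).1 hℓ
  have hsmall : (2 * ℓ + 1 : ℝ) * (n / √k0) ≤ 12 * n * (√k0)⁻¹ * ℓ := by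
    have : (2 * ℓ + 1 : ℝ) ≤ 12 * ℓ := by linarith [(Nat.one_le_cast.2 hℓpos : (1 : ℝ) ≤ ℓ)]
    rw [div_eq_mul_inv]
    nlinarith [mul_nonneg (Nat.cast_nonneg n : (0 : ℝ) ≤ n) (inv_nonneg.2 (Real.sqrt_nonneg k0))]
  rw [hone]
  refine (normL_sum_smul_le hN hEq havg hk hk0pos ha hone.le hℓpos).trans_lt ?_
  rw [div_lt_one (zero_lt_one.trans_le hf)]
  linarith
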